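/- arXiv:2410.10029 — 2 statements merged into one kernel-verified Lean document; each statement's English description precedes it below -/
import Mathlib

section
/- Let $\mathscr{L}_{F_K}$ be Coleman's trace operator for a Lubin-Tate formal group $F_K$ over $\mathcal{O}_K$, and let $\alpha \in \mathcal{O}_L^\times$ be a unit (where $L \subseteq K$). Then the $\alpha$-eigenspace of $\mathscr{L}_{F_K}$ in $\pi_L\mathcal{O}_K[[x]]$ is trivial: if $g \in \pi_L\mathcal{O}_K[[x]]$ satisfies $\mathscr{L}_{F_K}(g) = \alpha g$, then $g = 0$. -/
/-!
If `ϖ^N` divides every coefficient of `g`, then so does `ϖ^(N+1)`. Indeed every root `z` lies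
in `(ϖ)` and `F_K(x, 0) = x`, so `x ⊕ z ≡ x` and each summand `g(x ⊕ z)` of the trace is
`≡ g(x)` modulo `ϖ^(N+1)`; likewise `f_K ≡ x^q` modulo `π_K`, so `α g(f_K(x)) ≡ α g(x^q)`.
Comparing coefficients of `x^(qm)` gives `α g_m ≡ q g_m ≡ 0`, because `ϖ ∣ q`. Hence the
coefficients of `g` are infinitely `ϖ`-divisible, so `g = 0`.

Both divisibilities come from the Lubin-Tate structure: `ϖ ∣ π_K` because a nonzero root `z ∈ (ϖ)`
satisfies `0 = f_K(z) ≡ π_K z` modulo `z²`, and `π_K ∣ q` because, modulo `π_K`, the coefficient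
of `x^(q-1) y` is `q` in `f_K(F_K(x, y)) ≡ F_K(x, y)^q` and `0` in `F_K(x^q, y^q)`.
-/

open PowerSeries Finset

noncomputable section

namespace Coleman

variable {R : Type*} [CommRing R]

/-- The coefficient of `x^i y^j` in a two-variable power series. -/
def mcoeff (R : Type*) [CommRing R] (i j : ℕ) (F : MvPowerSeries (Fin 2) R) : R :=
  MvPowerSeries.coeff (Finsupp.single 0 i + Finsupp.single 1 j) F

/-- Exact composition `g(h)`; this is the correct composite when `h` has zero constant term. -/
def pcomp (g h : R⟦X⟧) : R⟦X⟧ :=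
  PowerSeries.mk fun n => ∑ k ∈ range (n + 1), coeff k g * coeff n (h ^ k)

/-- Exact substitution `F(a,b)`; correct when `a`, `b` have zero constant term. -/
def pcomp2 (F : MvPowerSeries (Fin 2) R) (a b : R⟦X⟧) : R⟦X⟧ :=
  PowerSeries.mk fun n => ∑ i ∈ range (n + 1), ∑ j ∈ range (n + 1),
    mcoeff R i j F * coeff n (a ^ i * b ^ j)

/-- Total degree of a bi-exponent. -/
def mdeg (d : Fin 2 →₀ ℕ) : ℕ := d 0 + d 1

/-- `g(F)` for a two-variable `F` with zero constant term. -/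
def mcomp1 (g : R⟦X⟧) (F : MvPowerSeries (Fin 2) R) : MvPowerSeries (Fin 2) R :=
  fun d => ∑ k ∈ range (mdeg d + 1), coeff k g * MvPowerSeries.coeff d (F ^ k)

/-- `F(A,B)` for two-variable `A`, `B` with zero constant term. -/
def mcomp2 (F A B : MvPowerSeries (Fin 2) R) : MvPowerSeries (Fin 2) R :=
  fun d => ∑ i ∈ range (mdeg d + 1), ∑ j ∈ range (mdeg d + 1),
    mcoeff R i j F * MvPowerSeries.coeff d (A ^ i * B ^ j)

/-- The one-variable series `g` viewed as a series in the variable `i` only. -/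
def embedVar (i : Fin 2) (g : R⟦X⟧) : MvPowerSeries (Fin 2) R :=
  fun d => if d = Finsupp.single i (d i) then coeff (d i) g else 0

/-- `S = g(a)`, where the substitution is understood as a `t`-adic (coefficientwise) limit
of the partial sums `∑_{k<M} g_k a^k`. -/
def IsSubst (t : R) (g a S : R⟦X⟧) : Prop :=
  ∀ n N : ℕ, ∃ M₀ : ℕ, ∀ M ≥ M₀,
    t ^ N ∣ (coeff n S - ∑ k ∈ range M, coeff k g * coeff n (a ^ k))

/-- `S = F(a,b)`, as a `t`-adic coefficientwise limit of partial sums. -/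
def IsSubst2 (t : R) (F : MvPowerSeries (Fin 2) R) (a b S : R⟦X⟧) : Prop :=
  ∀ n N : ℕ, ∃ M₀ : ℕ, ∀ M ≥ M₀,
    t ^ N ∣ (coeff n S - ∑ i ∈ range M, ∑ j ∈ range M,
      mcoeff R i j F * coeff n (a ^ i * b ^ j))

/-- `S` is the formal-group (`F`-) sum of the list `l` of power series. -/
def IsLTSum (t : R) (F : MvPowerSeries (Fin 2) R) : List R⟦X⟧ → R⟦X⟧ → Prop
  | [], S => S = 0
  | a :: l, S => ∃ T, IsLTSum t F l T ∧ IsSubst2 t F a T S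

/-- `v = g(u)`, as a `t`-adic limit of partial sums. -/
def IsEvalAt (t : R) (g : R⟦X⟧) (u v : R) : Prop :=
  ∀ N : ℕ, ∃ M₀, ∀ M ≥ M₀, t ^ N ∣ (v - ∑ k ∈ range M, coeff k g * u ^ k)

/-- `w = F(u,v)`, as a `t`-adic limit of partial sums. -/
def IsEval2At (t : R) (F : MvPowerSeries (Fin 2) R) (u v w : R) : Prop :=
  ∀ N : ℕ, ∃ M₀, ∀ M ≥ M₀,
    t ^ N ∣ (w - ∑ i ∈ range M, ∑ j ∈ range M, mcoeff R i j F * u ^ i * v ^ j)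

/-- `F` is a (one-dimensional, commutative) formal group law. -/
structure IsFGL (F : MvPowerSeries (Fin 2) R) : Prop where
  unitX : ∀ n, mcoeff R n 0 F = if n = 1 then 1 else 0
  unitY : ∀ n, mcoeff R 0 n F = if n = 1 then 1 else 0
  comm : ∀ i j, mcoeff R i j F = mcoeff R j i F

/-- `f` is a Lubin-Tate series for the uniformizer `π` and residue cardinality `q`:
`f ≡ πx mod x²` and `f ≡ x^q mod π`. -/
structure IsLT (π : R) (q : ℕ) (f : R⟦X⟧) : Prop where
  const : constantCoeff f = 0
  lin : coeff 1 f = π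
  frob : ∀ n, π ∣ (coeff n f - if n = q then 1 else 0)

/-- `F` is the Lubin-Tate formal group law attached to `f`:
`F ≡ x + y mod deg 2` and `f(F(x,y)) = F(f(x),f(y))`. -/
structure IsLTFGL (π : R) (q : ℕ) (f : R⟦X⟧) (F : MvPowerSeries (Fin 2) R) : Prop where
  isFGL : IsFGL F
  isLT : IsLT π q f
  commf : mcomp1 f F = mcomp2 F (embedVar 0 f) (embedVar 1 f)

/-- `g = [a]`, the Lubin-Tate endomorphism attached to `a`: `g ≡ a x mod x²` and `f∘g = g∘f`. -/
structure IsBracket (f : R⟦X⟧) (a : R) (g : R⟦X⟧) : Prop where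
  const : constantCoeff g = 0
  lin : coeff 1 g = a
  commf : pcomp f g = pcomp g f

/-- Every coefficient of `f` is divisible by `c`. -/
def DvdAll (c : R) (f : R⟦X⟧) : Prop := ∀ n, c ∣ coeff n f


section Rel

variable {OK A : Type*} [CommRing OK] [CommRing A] [Algebra OK A]

/-- `Rr i = r(x ⊕_K z_i)`: there are series `B i = F_K(x, z_i)` (substitution of the constant
`z_i` into the second variable of `F_K`, as an adic limit) with `Rr i = r(B i)` (again as an
adic limit, since `B i` has nonzero small constant term). -/
def IsOplusList (ϖ : A) (FKm : MvPowerSeries (Fin 2) A) {q : ℕ} (zs : Fin q → A)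
    (r : OK⟦X⟧) (Rr : Fin q → A⟦X⟧) : Prop :=
  ∃ B : Fin q → A⟦X⟧,
    (∀ i, IsSubst2 ϖ FKm X (PowerSeries.C (zs i)) (B i)) ∧
    ∀ i, IsSubst ϖ (PowerSeries.map (algebraMap OK A) r) (B i) (Rr i)

/-- `r ∈ 𝒜^α_{L,K}`: `|r(0)| < 1` and
`∑^{LT,L}_{z ∈ 𝔉₀(F_K)} r(x ⊕_K z) = [α]_L(r([π_K]_K(x)))`, where `bα` is (the image in
`A⟦x⟧` of) the endomorphism `[α]_L` and `fK = [π_K]_K`. -/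
def MemA (ϖ : A) (FLm FKm : MvPowerSeries (Fin 2) A) {q : ℕ} (zs : Fin q → A)
    (fK : OK⟦X⟧) (bα : A⟦X⟧) (πK : OK) (r : OK⟦X⟧) : Prop :=
  πK ∣ constantCoeff r ∧
  ∃ (Rr : Fin q → A⟦X⟧) (S RHS : A⟦X⟧),
    IsOplusList ϖ FKm zs r Rr ∧
    IsLTSum ϖ FLm (List.ofFn Rr) S ∧
    IsSubst ϖ bα (PowerSeries.map (algebraMap OK A) (pcomp r fK)) RHS ∧
    S = RHS

/-- `h ∈ 𝒟_{L,K}`: `∑^{LT,L}_{z ∈ 𝔉₀(F_K)} h(x ⊕_K z) = 0`. -/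
def MemD (ϖ : A) (FLm FKm : MvPowerSeries (Fin 2) A) {q : ℕ} (zs : Fin q → A)
    (h : OK⟦X⟧) : Prop :=
  ∃ (Rh : Fin q → A⟦X⟧) (S : A⟦X⟧),
    IsOplusList ϖ FKm zs h Rh ∧ IsLTSum ϖ FLm (List.ofFn Rh) S ∧ S = 0

/-- `φr = φ^α_{L,K}(r) = [q_K/α]_L(r(x)) ⊖_L r([π_K]_K(x))`, where `bq` is (the image of)
`[q_K/α]_L` and `ιm` (the image of) the formal inverse series of `F_L`. -/
def IsPhi (ϖ : A) (FLm : MvPowerSeries (Fin 2) A) (fK : OK⟦X⟧) (bq ιm : A⟦X⟧)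
    (r : OK⟦X⟧) (φr : A⟦X⟧) : Prop :=
  ∃ a m : A⟦X⟧,
    IsSubst ϖ bq (PowerSeries.map (algebraMap OK A) r) a ∧
    IsSubst ϖ ιm (PowerSeries.map (algebraMap OK A) (pcomp r fK)) m ∧
    IsSubst2 ϖ FLm a m φr

/-- `T = 𝓛_{F_K}(g)`, Coleman's trace operator:
`T([π_K]_K(x)) = ∑_{z ∈ 𝔉₀(F_K)} g(x ⊕_K z)` (ordinary sum). -/
def IsTraceOf (ϖ : A) (FKm : MvPowerSeries (Fin 2) A) {q : ℕ} (zs : Fin q → A)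
    (fK : OK⟦X⟧) (g T : OK⟦X⟧) : Prop :=
  ∃ Rg : Fin q → A⟦X⟧, IsOplusList ϖ FKm zs g Rg ∧
    PowerSeries.map (algebraMap OK A) (pcomp T fK) = ∑ i, Rg i

end Rel

lemma eq_zero_of_forall_pow_dvd {α : Type*} [CommMonoidWithZero α] [IsCancelMulZero α]
    [WfDvdMonoid α] {p z : α} (hp : ¬IsUnit p) (h : ∀ n, p ^ n ∣ z) : z = 0 := by
  by_contra hz
  obtain ⟨n, hn⟩ := FiniteMultiplicity.of_not_isUnit hp hz
  exact hn (h (n + 1))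

lemma C_dvd_iff_dvd_coeff (r : R) (f : R⟦X⟧) : C r ∣ f ↔ ∀ n, r ∣ coeff n f := by
  constructor
  · rintro ⟨g, rfl⟩ n
    simp [coeff_C_mul]
  · intro h
    choose c hc using h
    exact ⟨PowerSeries.mk c, by ext n; simp [coeff_C_mul, hc]⟩

lemma pow_succ_dvd_sum_sub {t : R} {N : ℕ} {T a b : R⟦X⟧} (hT : ∀ k, t ^ N ∣ coeff k T)
    (hab : C t ∣ a - b) (s : Finset ℕ) (n : ℕ) :
    t ^ (N + 1) ∣ ∑ k ∈ s, coeff k T * coeff n (a ^ k) - ∑ k ∈ s, coeff k T * coeff n (b ^ k) := by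
  rw [← sum_sub_distrib]
  refine dvd_sum fun k _ => ?_
  rw [← mul_sub, ← map_sub, pow_succ]
  exact mul_dvd_mul (hT k)
    ((C_dvd_iff_dvd_coeff _ _).1 (hab.trans (sub_dvd_pow_sub_pow a b k)) n)

lemma IsSubst.pow_succ_dvd_coeff_sub {t : R} {N : ℕ} {g a S : R⟦X⟧} (h : IsSubst t g a S)
    (hg : ∀ k, t ^ N ∣ coeff k g) (ha : C t ∣ a - X) (n : ℕ) :
    t ^ (N + 1) ∣ coeff n S - coeff n g := by
  obtain ⟨M₀, hM⟩ := h n (N + 1)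
  have hpartial := pow_succ_dvd_sum_sub hg ha (range (max M₀ (n + 1))) n
  have hX : ∑ k ∈ range (max M₀ (n + 1)), coeff k g * coeff n ((X : R⟦X⟧) ^ k) = coeff n g := by
    simp
  rw [hX] at hpartial
  simpa using dvd_add (hM (max M₀ (n + 1)) (le_max_left _ _)) hpartial

lemma pow_succ_dvd_coeff_pcomp_sub {t : R} {N q : ℕ} (hq : 0 < q) {T f : R⟦X⟧}
    (hT : ∀ k, t ^ N ∣ coeff k T) (hf : C t ∣ f - X ^ q) (m : ℕ) :
    t ^ (N + 1) ∣ coeff (q * m) (pcomp T f) - coeff m T := by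
  have hm : m < q * m + 1 := Nat.lt_succ_of_le (Nat.le_mul_of_pos_left m hq)
  have hX : ∑ k ∈ range (q * m + 1), coeff k T * coeff (q * m) ((X ^ q : R⟦X⟧) ^ k) =
      coeff m T := by
    simp [← pow_mul, coeff_X_pow, hq.ne', hm]
  rw [pcomp, coeff_mk, ← hX]
  exact pow_succ_dvd_sum_sub hT hf _ _

lemma map_pcomp {S : Type*} [CommRing S] (φ : R →+* S) (g h : R⟦X⟧) :
    PowerSeries.map φ (pcomp g h) = pcomp (PowerSeries.map φ g) (PowerSeries.map φ h) := by
  ext n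
  simp [pcomp, coeff_map, ← map_pow]

lemma sum_sum_mcoeff_mul_coeff_eq_coeff (F : MvPowerSeries (Fin 2) R) (a b : R⟦X⟧) (M n : ℕ) :
    ∑ i ∈ range M, ∑ j ∈ range M, mcoeff R i j F * coeff n (a ^ i * b ^ j) =
      coeff n (∑ i ∈ range M, ∑ j ∈ range M, C (mcoeff R i j F) * (a ^ i * b ^ j)) := by
  simp [map_sum, coeff_C_mul]

lemma IsSubst2.C_dvd_sub_X {t z : R} {F : MvPowerSeries (Fin 2) R} {B : R⟦X⟧}
    (hF : ∀ n, mcoeff R n 0 F = if n = 1 then 1 else 0) (hz : t ∣ z)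
    (h : IsSubst2 t F X (C z) B) : C t ∣ B - X := by
  rw [C_dvd_iff_dvd_coeff]
  intro n
  obtain ⟨M₀, hM⟩ := h n 1
  set M := max M₀ 2
  have hX : ∑ i ∈ range M, ∑ j ∈ range M, C (mcoeff R i j F) * (X ^ i * (0 : R⟦X⟧) ^ j) = X := by
    have hM1 : 1 < M := by omega
    rw [sum_congr rfl fun i _ => sum_eq_single_of_mem 0 (mem_range.2 (by omega))
      fun j _ hj => by rw [zero_pow hj, mul_zero, mul_zero]]
    simp [hF, apply_ite C, hM1]
  have hcongr : C t ∣ ∑ i ∈ range M, ∑ j ∈ range M, C (mcoeff R i j F) * (X ^ i * C z ^ j) -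
      ∑ i ∈ range M, ∑ j ∈ range M, C (mcoeff R i j F) * (X ^ i * (0 : R⟦X⟧) ^ j) := by
    rw [← sum_sub_distrib]
    refine dvd_sum fun i _ => ?_
    rw [← sum_sub_distrib]
    refine dvd_sum fun j _ => ?_
    rw [← mul_sub, ← mul_sub]
    exact ((map_dvd C hz).trans (by simpa using sub_dvd_pow_sub_pow (C z) 0 j)).mul_left _
      |>.mul_left _
  rw [hX] at hcongr
  have hB := hM M (le_max_left _ _)
  rw [pow_one] at hB
  have := dvd_add hB ((C_dvd_iff_dvd_coeff _ _).1 hcongr n)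
  rw [sum_sum_mcoeff_mul_coeff_eq_coeff] at this
  simpa using this

lemma IsEvalAt.pow_dvd_coeff_one_mul {t u : R} {f : R⟦X⟧} (h : IsEvalAt t f u 0)
    (hf : coeff 0 f = 0) {N : ℕ} (hN : t ^ N ∣ u ^ 2) : t ^ N ∣ coeff 1 f * u := by
  obtain ⟨M₀, hM⟩ := h N
  have hM2 : 2 ≤ max M₀ 2 := le_max_right _ _
  have hsplit := sum_range_add_sum_Ico (fun k => coeff k f * u ^ k) hM2
  have hlow : ∑ k ∈ range 2, coeff k f * u ^ k = coeff 1 f * u := by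
    simp [sum_range_succ, hf]
  have hhigh : t ^ N ∣ ∑ k ∈ Ico 2 (max M₀ 2), coeff k f * u ^ k :=
    dvd_sum fun k hk => (hN.trans (pow_dvd_pow u (mem_Ico.1 hk).1)).mul_left _
  have hsum : t ^ N ∣ ∑ k ∈ range (max M₀ 2), coeff k f * u ^ k := by
    simpa using (hM _ (le_max_left _ _)).neg_right
  rw [← hsplit, hlow] at hsum
  exact (dvd_add_left hhigh).1 hsum

lemma IsEvalAt.dvd_coeff_one {A : Type*} [CommRing A] [IsDomain A] [IsDiscreteValuationRing A]
    {ϖ z : A} (hϖ : Irreducible ϖ) {f : A⟦X⟧} (hf : coeff 0 f = 0) (hz : z ≠ 0)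
    (hϖz : ϖ ∣ z) (h : IsEvalAt ϖ f z 0) : ϖ ∣ coeff 1 f := by
  by_contra hdvd
  have hunit : IsUnit (coeff 1 f) := by
    by_contra hnu
    exact hdvd (Ideal.mem_span_singleton.1 (hϖ.maximalIdeal_eq ▸ hnu))
  have hpow : ∀ n, ϖ ^ (n + 1) ∣ z := by
    intro n
    induction n with
    | zero => simpa using hϖz
    | succ n ih =>
      have hsq : ϖ ^ (n + 1 + 1) ∣ z ^ 2 :=
        (pow_dvd_pow ϖ (by omega)).trans (pow_mul ϖ (n + 1) 2 ▸ pow_dvd_pow_of_dvd ih 2)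
      exact (hunit.dvd_mul_left).1 (h.pow_dvd_coeff_one_mul hf hsq)
  exact hz (eq_zero_of_forall_pow_dvd hϖ.not_isUnit
    fun n => (pow_dvd_pow ϖ n.le_succ).trans (hpow n))

lemma coeff_X_add_X_pow (q : ℕ) :
    MvPowerSeries.coeff (Finsupp.single 0 q + Finsupp.single 1 1)
      ((MvPowerSeries.X 0 + MvPowerSeries.X 1 : MvPowerSeries (Fin 2) R) ^ (q + 1)) = q + 1 := by
  have hterm : ∀ m, MvPowerSeries.coeff (Finsupp.single 0 q + Finsupp.single 1 1)
      ((MvPowerSeries.X 0 : MvPowerSeries (Fin 2) R) ^ m * MvPowerSeries.X 1 ^ (q + 1 - m) *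
        ((q + 1).choose m : MvPowerSeries (Fin 2) R)) =
      if m = q then ((q + 1).choose m : R) else 0 := by
    intro m
    rw [MvPowerSeries.X_pow_eq, MvPowerSeries.X_pow_eq, MvPowerSeries.monomial_mul_monomial,
      ← map_natCast MvPowerSeries.C, MvPowerSeries.coeff_mul_C, MvPowerSeries.coeff_monomial]
    by_cases hm : m = q
    · simp [hm]
    · have hne : Finsupp.single 0 q + Finsupp.single 1 1 ≠
          Finsupp.single (0 : Fin 2) m + Finsupp.single 1 (q + 1 - m) :=
        fun h => hm (by simpa using (DFunLike.congr_fun h 0).symm)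
      rw [if_neg hne, if_neg hm, zero_mul]
  rw [add_pow, map_sum, sum_congr rfl fun m _ => hterm m, sum_ite_eq']
  simp

open MvPowerSeries in
lemma IsFGL.two_le_order_sub {F : MvPowerSeries (Fin 2) R} (hF : IsFGL F) :
    2 ≤ (F - (MvPowerSeries.X 0 + MvPowerSeries.X 1)).order := by
  refine nat_le_order fun d hd => ?_
  obtain ⟨a, b, rfl⟩ : ∃ a b, d = Finsupp.single 0 a + Finsupp.single 1 b :=
    ⟨d 0, d 1, by ext i; fin_cases i <;> simp⟩
  have hab : a + b < 2 := by simpa using hd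
  rw [map_sub, show MvPowerSeries.coeff _ F = mcoeff R a b F from rfl]
  rcases (by omega : a = 0 ∧ b = 0 ∨ a = 1 ∧ b = 0 ∨ a = 0 ∧ b = 1) with
    ⟨rfl, rfl⟩ | ⟨rfl, rfl⟩ | ⟨rfl, rfl⟩ <;>
  simp [hF.unitX, hF.unitY, MvPowerSeries.coeff_X, Finsupp.single_eq_single_iff]

open MvPowerSeries in
lemma IsFGL.coeff_pow {F : MvPowerSeries (Fin 2) R} (hF : IsFGL F) (q : ℕ) :
    MvPowerSeries.coeff (Finsupp.single 0 q + Finsupp.single 1 1) (F ^ (q + 1)) = q + 1 := by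
  set L : MvPowerSeries (Fin 2) R := MvPowerSeries.X 0 + MvPowerSeries.X 1
  have hF0 : constantCoeff F = 0 := by simpa [mcoeff] using hF.unitX 0
  have hL0 : constantCoeff L = 0 := by simp [L]
  -- `F^(q+1) - L^(q+1)` is `F - L`, of order `≥ 2`, times a sum of terms of order `≥ q`.
  have hterm : ∀ i ∈ range (q + 1), MvPowerSeries.coeff (Finsupp.single 0 q + Finsupp.single 1 1)
      (F ^ i * L ^ (q - i) * (F - L)) = 0 := by
    intro i hi
    have hiq : i ≤ q := Nat.lt_succ_iff.1 (mem_range.1 hi)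
    apply MvPowerSeries.coeff_of_lt_order
    calc ((Finsupp.degree (Finsupp.single (0 : Fin 2) q + Finsupp.single 1 1) : ℕ) : ℕ∞)
        < (i + (q - i) + 2 : ℕ) := by
          simp only [map_add, Finsupp.degree_single]; norm_cast; omega
      _ ≤ (F ^ i).order + (L ^ (q - i)).order + (F - L).order := by
        push_cast
        gcongr
        · exact le_order_pow_of_constantCoeff_eq_zero i hF0
        · exact le_order_pow_of_constantCoeff_eq_zero _ hL0
        · exact_mod_cast hF.two_le_order_sub
      _ ≤ _ := (add_le_add_left le_order_mul _).trans le_order_mul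
  rw [← sub_add_cancel (F ^ (q + 1)) (L ^ (q + 1)), map_add, ← geom_sum₂_mul, Nat.add_sub_cancel,
    sum_mul, map_sum, sum_eq_zero hterm, zero_add, coeff_X_add_X_pow]

section BaseChange

variable {S : Type*} [CommRing S] (φ : R →+* S)

lemma mcoeff_map (i j : ℕ) (F : MvPowerSeries (Fin 2) R) :
    mcoeff S i j (MvPowerSeries.map φ F) = φ (mcoeff R i j F) :=
  MvPowerSeries.coeff_map φ _ F

lemma IsFGL.map {F : MvPowerSeries (Fin 2) R} (hF : IsFGL F) :
    IsFGL (MvPowerSeries.map φ F) where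
  unitX n := by simp [mcoeff_map, hF.unitX, apply_ite φ]
  unitY n := by simp [mcoeff_map, hF.unitY, apply_ite φ]
  comm i j := by simp [mcoeff_map, hF.comm i j]

lemma map_mcomp1 (f : R⟦X⟧) (F : MvPowerSeries (Fin 2) R) :
    MvPowerSeries.map φ (mcomp1 f F) = mcomp1 (PowerSeries.map φ f) (MvPowerSeries.map φ F) := by
  ext d
  rw [MvPowerSeries.coeff_map, MvPowerSeries.coeff_apply, MvPowerSeries.coeff_apply]
  simp [mcomp1, ← map_pow, MvPowerSeries.coeff_map]

lemma map_mcomp2 (F A B : MvPowerSeries (Fin 2) R) :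
    MvPowerSeries.map φ (mcomp2 F A B) =
      mcomp2 (MvPowerSeries.map φ F) (MvPowerSeries.map φ A) (MvPowerSeries.map φ B) := by
  ext d
  rw [MvPowerSeries.coeff_map, MvPowerSeries.coeff_apply, MvPowerSeries.coeff_apply]
  simp [mcomp2, ← map_pow, ← map_mul, MvPowerSeries.coeff_map, mcoeff_map]

lemma map_embedVar (i : Fin 2) (g : R⟦X⟧) :
    MvPowerSeries.map φ (embedVar i g) = embedVar i (PowerSeries.map φ g) := by
  ext d
  rw [MvPowerSeries.coeff_map, MvPowerSeries.coeff_apply, MvPowerSeries.coeff_apply]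
  simp [embedVar, apply_ite φ]

end BaseChange

lemma embedVar_X_pow (i : Fin 2) (q : ℕ) :
    embedVar i (X ^ q : R⟦X⟧) = MvPowerSeries.X i ^ q := by
  ext d
  rw [MvPowerSeries.coeff_apply, embedVar, MvPowerSeries.X_pow_eq, MvPowerSeries.coeff_monomial,
    coeff_X_pow]
  by_cases h : d = Finsupp.single i (d i)
  · have hq : d = Finsupp.single i q ↔ d i = q :=
      ⟨fun hq => by simp [hq], fun hq => by rw [h, hq]⟩
    rw [if_pos h]
    exact if_congr hq.symm rfl rfl
  · rw [if_neg h, if_neg fun hq => h (by rw [hq, Finsupp.single_eq_same])]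

lemma mcomp1_X_pow_apply (F : MvPowerSeries (Fin 2) R) {q : ℕ} {d : Fin 2 →₀ ℕ}
    (hd : q ≤ mdeg d) : mcomp1 (X ^ q) F d = MvPowerSeries.coeff d (F ^ q) := by
  simp [mcomp1, coeff_X_pow, Nat.lt_succ_of_le hd]

lemma mcomp2_X_pow_apply_eq_zero (F : MvPowerSeries (Fin 2) R) {q : ℕ} {d : Fin 2 →₀ ℕ}
    (hd : ¬q ∣ d 1) :
    mcomp2 F (MvPowerSeries.X 0 ^ q) (MvPowerSeries.X 1 ^ q) d = 0 := by
  refine sum_eq_zero fun i _ => sum_eq_zero fun j _ => ?_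
  rw [← pow_mul, ← pow_mul, MvPowerSeries.X_pow_eq, MvPowerSeries.X_pow_eq,
    MvPowerSeries.monomial_mul_monomial, MvPowerSeries.coeff_monomial, if_neg, mul_zero]
  rintro rfl
  simp at hd

lemma IsLT.C_dvd_sub_X_pow {π : R} {q : ℕ} {f : R⟦X⟧} (hf : IsLT π q f) : C π ∣ f - X ^ q :=
  (C_dvd_iff_dvd_coeff _ _).2 fun n => by simpa [coeff_X_pow] using hf.frob n

lemma IsLTFGL.dvd_natCast {π : R} {q : ℕ} {f : R⟦X⟧} {F : MvPowerSeries (Fin 2) R}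
    (h : IsLTFGL π q f F) (hq : 2 ≤ q) : π ∣ (q : R) := by
  set ψ := Ideal.Quotient.mk (Ideal.span {π})
  have hf : PowerSeries.map ψ f = X ^ q := by
    obtain ⟨c, hc⟩ := h.isLT.C_dvd_sub_X_pow
    rw [← sub_eq_zero, ← map_X ψ, ← map_pow, ← map_sub, hc, map_mul, map_C,
      Ideal.Quotient.eq_zero_iff_mem.2 (Ideal.mem_span_singleton_self π), map_zero, zero_mul]
  obtain ⟨p, rfl⟩ : ∃ p, q = p + 1 := ⟨q - 1, by omega⟩
  have hcomm := congrArg (fun G => MvPowerSeries.coeff (Finsupp.single 0 p + Finsupp.single 1 1)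
    (MvPowerSeries.map ψ G)) h.commf
  simp only [map_mcomp1, map_mcomp2, map_embedVar, hf, embedVar_X_pow,
    MvPowerSeries.coeff_apply] at hcomm
  rw [mcomp1_X_pow_apply _ (by simp [mdeg]), mcomp2_X_pow_apply_eq_zero _ (by simp; omega),
    (h.isFGL.map ψ).coeff_pow] at hcomm
  rw [← Ideal.mem_span_singleton, ← Ideal.Quotient.eq_zero_iff_mem]
  exact_mod_cast hcomm

lemma pow_succ_dvd_coeff_of_pcomp_eq_sum {t c : R} (hc : IsUnit c) {q N : ℕ} (hq : 0 < q)
    (htq : t ∣ (q : R)) {f g : R⟦X⟧} (hf : C t ∣ f - X ^ q) {B Rg : Fin q → R⟦X⟧}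
    (hB : ∀ i, C t ∣ B i - X) (hRg : ∀ i, IsSubst t g (B i) (Rg i))
    (htrace : pcomp (C c * g) f = ∑ i, Rg i) (hg : ∀ k, t ^ N ∣ coeff k g) (m : ℕ) :
    t ^ (N + 1) ∣ coeff m g := by
  have hsum : t ^ (N + 1) ∣ ∑ i, coeff (q * m) (Rg i) := by
    rw [← sub_add_cancel (∑ i, coeff (q * m) (Rg i)) (∑ _i : Fin q, coeff (q * m) g),
      ← sum_sub_distrib]
    refine dvd_add (dvd_sum fun i _ => (hRg i).pow_succ_dvd_coeff_sub hg (hB i) _) ?_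
    rw [sum_const, card_univ, Fintype.card_fin, nsmul_eq_mul, pow_succ']
    exact mul_dvd_mul htq (hg _)
  have hlhs := pow_succ_dvd_coeff_pcomp_sub hq (T := C c * g)
    (fun k => by rw [coeff_C_mul]; exact (hg k).mul_left c) hf m
  rw [htrace, map_sum, coeff_C_mul] at hlhs
  exact hc.dvd_mul_left.1 ((dvd_sub_right hsum).1 hlhs)

lemma eq_zero_of_pcomp_eq_sum {A : Type*} [CommRing A] [IsDomain A] [IsDiscreteValuationRing A]
    {ϖ c : A} (hϖ : Irreducible ϖ) (hc : IsUnit c) {q : ℕ} (hq : 0 < q) (hϖq : ϖ ∣ (q : A))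
    {f g : A⟦X⟧} (hf : C ϖ ∣ f - X ^ q) {B Rg : Fin q → A⟦X⟧} (hB : ∀ i, C ϖ ∣ B i - X)
    (hRg : ∀ i, IsSubst ϖ g (B i) (Rg i)) (htrace : pcomp (C c * g) f = ∑ i, Rg i) :
    g = 0 := by
  have hpow : ∀ N k, ϖ ^ N ∣ coeff k g := by
    intro N
    induction N with
    | zero => simp
    | succ N ih => exact pow_succ_dvd_coeff_of_pcomp_eq_sum hc hq hϖq hf hB hRg htrace ih
  ext k
  exact eq_zero_of_forall_pow_dvd hϖ.not_isUnit fun N => hpow N k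

theorem stmt13_general
    {OL OK A : Type*} [CommRing OL]
    [CommRing OK]
    [CommRing A] [IsDomain A] [IsDiscreteValuationRing A]
    [Algebra OL OK] [Algebra OK A] [Algebra OL A] [IsScalarTower OL OK A]
    (hinj2 : Function.Injective (algebraMap OK A))
    (πK : OK)
    (ϖ : A) (hϖ : Irreducible ϖ)
    (qK : ℕ) (hqK : 2 ≤ qK)
    (fK : OK⟦X⟧) (FK : MvPowerSeries (Fin 2) OK) (hFK : IsLTFGL πK qK fK FK)
    -- the roots `𝔉₀(F_K)` of `f_K` (including `0`), inside the maximal ideal of `A`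
    (zs : Fin qK → A) (hz0 : ∃ i, zs i = 0)
    (hzroot : ∀ i, IsEvalAt ϖ (PowerSeries.map (algebraMap OK A) fK) (zs i) 0)
    (hzinj : Function.Injective zs) (hzmax : ∀ i, ϖ ∣ zs i)
    (α : OL) (hα : IsUnit α)
    (g : OK⟦X⟧)
    (heig : IsTraceOf ϖ (MvPowerSeries.map (algebraMap OK A) FK) zs fK g
      (PowerSeries.C (algebraMap OL OK α) * g)) :
    g = 0 := by
  obtain ⟨Rg, ⟨B, hB, hRg⟩, htrace⟩ := heig
  set φ := algebraMap OK A
  obtain ⟨i₀, hi₀⟩ := hz0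
  have : Nontrivial (Fin qK) := Fin.nontrivial_iff_two_le.2 hqK
  obtain ⟨i₁, hi₁⟩ := exists_ne i₀
  have hϖπ : ϖ ∣ φ πK := by
    simpa [hFK.isLT.lin] using (hzroot i₁).dvd_coeff_one hϖ (by simp [coeff_map, hFK.isLT.const])
      (fun h => hi₁ (hzinj (h.trans hi₀.symm))) (hzmax i₁)
  have hfX : C ϖ ∣ PowerSeries.map φ fK - X ^ qK :=
    (map_dvd C hϖπ).trans (by simpa using map_dvd (PowerSeries.map φ) hFK.isLT.C_dvd_sub_X_pow)
  have hϖq : ϖ ∣ (qK : A) := hϖπ.trans (by simpa using map_dvd φ (hFK.dvd_natCast hqK))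
  have hBX : ∀ i, C ϖ ∣ B i - X := fun i => (hB i).C_dvd_sub_X (hFK.isFGL.map φ).unitX (hzmax i)
  have hα' : IsUnit (φ (algebraMap OL OK α)) := by
    rw [← IsScalarTower.algebraMap_apply]
    exact hα.map _
  rw [map_pcomp, map_mul, map_C] at htrace
  exact PowerSeries.map_injective φ hinj2 (by
    simpa using eq_zero_of_pcomp_eq_sum hϖ hα' (by omega) hϖq hfX hBX hRg htrace)

/-- For a unit `α ∈ O_L^×`, the `α`-eigenspace of Coleman's trace operator
`𝓛_{F_K}` in `π_L·O_K⟦x⟧` is trivial: if `g ∈ π_L·O_K⟦x⟧` and `𝓛_{F_K}(g) = α·g`,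
then `g = 0`. -/
theorem stmt13
    {OL OK A : Type*} [CommRing OL] [IsDomain OL] [IsDiscreteValuationRing OL]
    [CommRing OK] [IsDomain OK] [IsDiscreteValuationRing OK]
    [CommRing A] [IsDomain A] [IsDiscreteValuationRing A]
    [Algebra OL OK] [Algebra OK A] [Algebra OL A] [IsScalarTower OL OK A]
    (hinj1 : Function.Injective (algebraMap OL OK))
    (hinj2 : Function.Injective (algebraMap OK A))
    (πL : OL) (hπL : Irreducible πL) (πK : OK) (hπK : Irreducible πK)
    (ϖ : A) (hϖ : Irreducible ϖ) [IsAdicComplete (Ideal.span {ϖ}) A]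
    (qL qK : ℕ) (hqL : 2 ≤ qL) (hqK : 2 ≤ qK)
    (fL : OL⟦X⟧) (FL : MvPowerSeries (Fin 2) OL) (hFL : IsLTFGL πL qL fL FL)
    (fK : OK⟦X⟧) (FK : MvPowerSeries (Fin 2) OK) (hFK : IsLTFGL πK qK fK FK)
    -- the roots `𝔉₀(F_K)` of `f_K` (including `0`), inside the maximal ideal of `A`
    (zs : Fin qK → A) (hz0 : ∃ i, zs i = 0)
    (hzroot : ∀ i, IsEvalAt ϖ (PowerSeries.map (algebraMap OK A) fK) (zs i) 0)
    (hzinj : Function.Injective zs) (hzmax : ∀ i, ϖ ∣ zs i)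
    (α : OL) (hα : IsUnit α)
    (g : OK⟦X⟧) (hg : DvdAll (algebraMap OL OK πL) g)
    (heig : IsTraceOf ϖ (MvPowerSeries.map (algebraMap OK A) FK) zs fK g
      (PowerSeries.C (algebraMap OL OK α) * g)) :
    g = 0 :=
  stmt13_general hinj2 πK ϖ hϖ qK hqK fK FK hFK zs hz0 hzroot hzinj hzmax α hα g heig

end Coleman
end
end

section
/- Let $F_K$ be a Lubin-Tate formal group over $\mathcal{O}_K$ with trace operator $\mathscr{L}_{F_K}$, and fix series $k(x) \in x^{q_K-1}\mathcal{O}_K[[x]]$ and $w(x) \in \mathcal{O}_K[[x]]$ with $\mathscr{L}_{F_K}(k) = \pi_K w$ and $w$ a unit in $\mathcal{O}_K[[x]]$ (equivalently $w(0) \in \mathcal{O}_K^\times$), satisfying the Coleman identity $\mathscr{L}_{F_K}\big(\tfrac{k(x)\,g([\pi_K]_K(x))}{\pi_K w([\pi_K]_K(x))}\big) = g(x)$ for all $g \in \mathcal{O}_K[[x]]$. Let $\alpha(x) \in \pi_K^2\mathcal{O}_K[[x]]$, let $\mathscr{E}^\alpha_K = \{ f \in \mathcal{O}_K[[x]] :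 \mathscr{L}_{F_K}(f) = \alpha(x) f(x)\}$ and $\mathscr{C}_K = \ker(\mathscr{L}_{F_K}) \subseteq \mathcal{O}_K[[x]]$. Then the map $\rho_\alpha(f) = f(x) - \frac{k(x)\,\alpha([\pi_K]_K(x))\,f([\pi_K]_K(x))}{\pi_K\, w([\pi_K]_K(x))}$ is an isomorphism of $\mathcal{O}_K$-modules $\mathscr{E}^\alpha_K \to \mathscr{C}_K$. -/
open PowerSeries Finset

noncomputable section

namespace Coleman

variable {R : Type*} [CommRing R]

/-! Write `ρ_α(f) = f - T f` with `T f = π_K · G(x) · f([π_K](x))`, where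
`α([π_K](x)) = π_K² β(x)` and `G = k β / w([π_K](x))`. Since `T` raises `π_K`-divisibility by one,
`f ↦ f - T f` is bijective on `O_K⟦x⟧`: injective because `O_K` is `π_K`-adically Hausdorff,
surjective by successive approximation. The Coleman identity with `g = α f` gives
`𝓛_{F_K}(T f) = α f`, so `f - T f ∈ 𝓒_K` exactly when `f ∈ 𝓔^α_K`. -/

@[simp]
lemma coeff_pcomp (g h : R⟦X⟧) (n : ℕ) :
    coeff n (pcomp g h) = ∑ k ∈ range (n + 1), coeff k g * coeff n (h ^ k) :=
  coeff_mk _ _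

lemma pcomp_add (g g' h : R⟦X⟧) : pcomp (g + g') h = pcomp g h + pcomp g' h := by
  ext n
  simp [add_mul, sum_add_distrib]

lemma pcomp_neg (g h : R⟦X⟧) : pcomp (-g) h = -pcomp g h := by
  ext n
  simp [neg_mul]

lemma pcomp_C_mul (c : R) (g h : R⟦X⟧) : pcomp (C c * g) h = C c * pcomp g h := by
  ext n
  simp [mul_sum, mul_assoc]

lemma C_dvd_pcomp {c : R} {g : R⟦X⟧} (hg : C c ∣ g) (h : R⟦X⟧) : C c ∣ pcomp g h := by
  obtain ⟨g', rfl⟩ := hg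
  exact ⟨pcomp g' h, pcomp_C_mul c g' h⟩

lemma constantCoeff_pcomp (g h : R⟦X⟧) : constantCoeff (pcomp g h) = constantCoeff g := by
  rw [← coeff_zero_eq_constantCoeff_apply, ← coeff_zero_eq_constantCoeff_apply, coeff_pcomp]
  simp

lemma isUnit_pcomp {g : R⟦X⟧} (hg : IsUnit g) (h : R⟦X⟧) : IsUnit (pcomp g h) := by
  rwa [isUnit_iff_constantCoeff, constantCoeff_pcomp, ← isUnit_iff_constantCoeff]

lemma pcomp_eq_subst {h : R⟦X⟧} (h0 : constantCoeff h = 0) (g : R⟦X⟧) :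
    pcomp g h = g.subst h := by
  ext n
  rw [coeff_pcomp, coeff_subst' (HasSubst.of_constantCoeff_zero' h0),
    finsum_eq_sum_of_support_subset _ (s := range (n + 1))]
  · rfl
  intro k hk
  by_contra hkn
  have hX : X ^ k ∣ h ^ k := pow_dvd_pow_of_dvd (X_dvd_iff.2 h0) k
  exact hk (by simp [X_pow_dvd_iff.1 hX n (by simpa using hkn)])

lemma pcomp_mul {h : R⟦X⟧} (h0 : constantCoeff h = 0) (g g' : R⟦X⟧) :
    pcomp (g * g') h = pcomp g h * pcomp g' h := by
  simp only [pcomp_eq_subst h0, subst_mul (HasSubst.of_constantCoeff_zero' h0)]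

lemma dvdAll_iff_C_dvd {c : R} {f : R⟦X⟧} : DvdAll c f ↔ C c ∣ f := by
  refine ⟨fun h => ⟨mk fun n => (h n).choose, ?_⟩, fun ⟨g, hg⟩ n => ?_⟩
  · ext n
    rw [coeff_C_mul, coeff_mk, ← (h n).choose_spec]
  · simp [hg]

lemma C_pow_dvd_iff {c : R} {N : ℕ} {f : R⟦X⟧} : C c ^ N ∣ f ↔ ∀ n, c ^ N ∣ coeff n f := by
  rw [← map_pow, ← dvdAll_iff_C_dvd, DvdAll]

lemma smodEq_span_pow_iff (π : R) (N : ℕ) (x y : R) :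
    x ≡ y [SMOD (Ideal.span {π} ^ N • ⊤ : Submodule R R)] ↔ π ^ N ∣ x - y := by
  rw [SModEq.sub_mem, smul_eq_mul, Ideal.mul_top, Ideal.span_singleton_pow,
    Ideal.mem_span_singleton]

section Contraction

variable {π : R}

lemma eq_zero_of_forall_C_pow_dvd [IsHausdorff (Ideal.span {π}) R] {f : R⟦X⟧}
    (h : ∀ N, C π ^ N ∣ f) : f = 0 := by
  ext n
  refine IsHausdorff.haus' (I := Ideal.span {π}) _ fun N => ?_
  rw [smodEq_span_pow_iff, sub_zero]
  exact C_pow_dvd_iff.1 (h N) n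

lemma exists_forall_C_pow_dvd_sub_of_succ [IsPrecomplete (Ideal.span {π}) R] (F : ℕ → R⟦X⟧)
    (hF : ∀ m, C π ^ m ∣ F (m + 1) - F m) : ∃ f, ∀ m, C π ^ m ∣ F m - f := by
  have hcauchy : ∀ m d, C π ^ m ∣ F (m + d) - F m := by
    intro m d
    induction d with
    | zero => simp
    | succ d ih =>
      rw [← add_assoc, ← sub_add_sub_cancel _ (F (m + d))]
      exact dvd_add ((pow_dvd_pow _ (by omega)).trans (hF _)) ih
  have hlim : ∀ n, ∃ L, ∀ m, π ^ m ∣ coeff n (F m) - L := by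
    intro n
    obtain ⟨L, hL⟩ := IsPrecomplete.prec ‹_› (f := fun m => coeff n (F m)) fun {m m'} hmm' => by
      obtain ⟨d, rfl⟩ := Nat.exists_eq_add_of_le hmm'
      rw [smodEq_span_pow_iff, dvd_sub_comm, ← map_sub]
      exact C_pow_dvd_iff.1 (hcauchy m d) n
    exact ⟨L, fun m => (smodEq_span_pow_iff _ _ _ _).1 (hL m)⟩
  choose L hL using hlim
  exact ⟨mk L, fun m => C_pow_dvd_iff.2 fun n => by simpa using hL n m⟩

def IsContracting (π : R) (T : R⟦X⟧ →+ R⟦X⟧) : Prop :=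
  ∀ N f, C π ^ N ∣ f → C π ^ (N + 1) ∣ T f

variable {T : R⟦X⟧ →+ R⟦X⟧}

lemma IsContracting.eq_zero_of_eq [IsHausdorff (Ideal.span {π}) R] (hT : IsContracting π T)
    {f : R⟦X⟧} (hf : f = T f) : f = 0 :=
  eq_zero_of_forall_C_pow_dvd fun N => by
    induction N with
    | zero => simp
    | succ N ih => rw [hf]; exact hT N f ih

lemma IsContracting.exists_eq_add [IsAdicComplete (Ideal.span {π}) R] (hT : IsContracting π T)
    (h : R⟦X⟧) : ∃ f, f = h + T f := by
  set F : ℕ → R⟦X⟧ := fun m => (fun g => h + T g)^[m] 0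
  have hF : ∀ m, F (m + 1) = h + T (F m) := fun m => Function.iterate_succ_apply' _ _ _
  have hstep : ∀ m, C π ^ m ∣ F (m + 1) - F m := by
    intro m
    induction m with
    | zero => simp
    | succ m ih =>
      have hdiff : F (m + 1 + 1) - F (m + 1) = T (F (m + 1) - F m) := by
        rw [map_sub]
        linear_combination hF (m + 1) - hF m
      rw [hdiff]
      exact hT m _ ih
  obtain ⟨f, hf⟩ := exists_forall_C_pow_dvd_sub_of_succ F hstep
  refine ⟨f, sub_eq_zero.1 (eq_zero_of_forall_C_pow_dvd (π := π) fun N => ?_)⟩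
  have hsplit : f - (h + T f) = -(F (N + 1) - f) + T (F N - f) := by
    rw [map_sub]
    linear_combination hF N
  rw [hsplit]
  exact dvd_add (dvd_neg.2 ((pow_dvd_pow _ N.le_succ).trans (hf _)))
    ((pow_dvd_pow _ N.le_succ).trans (hT N _ (hf N)))

def perturbation (π : R) (G h : R⟦X⟧) : R⟦X⟧ →+ R⟦X⟧ :=
  AddMonoidHom.mk' (fun f => C π * (G * pcomp f h)) fun f g => by rw [pcomp_add]; ring

lemma isContracting_perturbation (π : R) (G h : R⟦X⟧) :
    IsContracting π (perturbation π G h) := by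
  rintro N _ ⟨g, rfl⟩
  refine ⟨G * pcomp g h, ?_⟩
  simp only [perturbation, AddMonoidHom.mk'_apply, ← map_pow, pcomp_C_mul]
  rw [pow_succ', map_mul]
  ring

end Contraction

section Trace

variable {t : R}

lemma IsSubst.add {g g' a S S' : R⟦X⟧} (h : IsSubst t g a S) (h' : IsSubst t g' a S') :
    IsSubst t (g + g') a (S + S') := by
  intro n N
  obtain ⟨M₁, hM₁⟩ := h n N
  obtain ⟨M₂, hM₂⟩ := h' n N
  refine ⟨max M₁ M₂, fun M hM => ?_⟩
  convert dvd_add (hM₁ M (le_of_max_le_left hM)) (hM₂ M (le_of_max_le_right hM)) using 1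
  simp only [map_add, add_mul, sum_add_distrib]
  ring

lemma IsSubst.neg {g a S : R⟦X⟧} (h : IsSubst t g a S) : IsSubst t (-g) a (-S) := by
  intro n N
  obtain ⟨M₀, hM₀⟩ := h n N
  refine ⟨M₀, fun M hM => ?_⟩
  convert (hM₀ M hM).neg_right using 1
  simp only [map_neg, neg_mul, sum_neg_distrib]
  ring

lemma IsSubst2.unique [IsHausdorff (Ideal.span {t}) R] {F : MvPowerSeries (Fin 2) R}
    {a b S S' : R⟦X⟧} (h : IsSubst2 t F a b S) (h' : IsSubst2 t F a b S') : S = S' := by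
  ext n
  refine (IsHausdorff.eq_iff_smodEq (I := Ideal.span {t})).2 fun N => ?_
  rw [smodEq_span_pow_iff]
  obtain ⟨M₁, hM₁⟩ := h n N
  obtain ⟨M₂, hM₂⟩ := h' n N
  convert dvd_sub (hM₁ _ (le_max_left M₁ M₂)) (hM₂ _ (le_max_right M₁ M₂)) using 1
  ring

variable {OK A : Type*} [CommRing OK] [CommRing A] [Algebra OK A] {ϖ : A}
  {FKm : MvPowerSeries (Fin 2) A} {q : ℕ} {zs : Fin q → A}

lemma IsOplusList.add [IsHausdorff (Ideal.span {ϖ}) A] {r r' : OK⟦X⟧} {Rr Rr' : Fin q → A⟦X⟧}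
    (h : IsOplusList ϖ FKm zs r Rr) (h' : IsOplusList ϖ FKm zs r' Rr') :
    IsOplusList ϖ FKm zs (r + r') (Rr + Rr') := by
  obtain ⟨B, hB, hR⟩ := h
  obtain ⟨B', hB', hR'⟩ := h'
  obtain rfl : B' = B := funext fun i => (hB' i).unique (hB i)
  exact ⟨B', hB, fun i => by simpa only [map_add, Pi.add_apply] using (hR i).add (hR' i)⟩

lemma IsOplusList.neg {r : OK⟦X⟧} {Rr : Fin q → A⟦X⟧} (h : IsOplusList ϖ FKm zs r Rr) :
    IsOplusList ϖ FKm zs (-r) (-Rr) := by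
  obtain ⟨B, hB, hR⟩ := h
  exact ⟨B, hB, fun i => by simpa only [map_neg, Pi.neg_apply] using (hR i).neg⟩

variable {fK g g' T T' : OK⟦X⟧}

lemma IsTraceOf.add [IsHausdorff (Ideal.span {ϖ}) A] (h : IsTraceOf ϖ FKm zs fK g T)
    (h' : IsTraceOf ϖ FKm zs fK g' T') : IsTraceOf ϖ FKm zs fK (g + g') (T + T') := by
  obtain ⟨Rg, hR, hsum⟩ := h
  obtain ⟨Rg', hR', hsum'⟩ := h'
  refine ⟨Rg + Rg', hR.add hR', ?_⟩
  rw [pcomp_add, map_add, hsum, hsum', ← sum_add_distrib]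
  rfl

lemma IsTraceOf.neg (h : IsTraceOf ϖ FKm zs fK g T) : IsTraceOf ϖ FKm zs fK (-g) (-T) := by
  obtain ⟨Rg, hR, hsum⟩ := h
  refine ⟨-Rg, hR.neg, ?_⟩
  rw [pcomp_neg, map_neg, hsum, ← sum_neg_distrib]
  rfl

lemma IsTraceOf.sub [IsHausdorff (Ideal.span {ϖ}) A] (h : IsTraceOf ϖ FKm zs fK g T)
    (h' : IsTraceOf ϖ FKm zs fK g' T') : IsTraceOf ϖ FKm zs fK (g - g') (T - T') := by
  simpa only [sub_eq_add_neg] using h.add h'.neg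

end Trace

lemma exists_forall_C_mul_mul_eq_iff [IsDomain R] {π : R} (hπ : π ≠ 0)
    {W A : R⟦X⟧} (hW : IsUnit W) (hA : C π ^ 2 ∣ A) (k : R⟦X⟧) :
    ∃ G, ∀ f D, C π * W * D = k * A * f ↔ D = C π * (G * f) := by
  obtain ⟨β, rfl⟩ := hA
  obtain ⟨u, rfl⟩ := hW
  refine ⟨↑u⁻¹ * (k * β), fun f D => ?_⟩
  have hne : C π * (u : R⟦X⟧) ≠ 0 := mul_ne_zero ((map_ne_zero_iff C C_injective).2 hπ) u.ne_zero
  have hcancel : C π * ↑u * (C π * (↑u⁻¹ * (k * β) * f)) = k * (C π ^ 2 * β) * f := by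
    linear_combination (C π ^ 2 * k * β * f) * u.mul_inv
  rw [← mul_right_inj' hne (b := D), hcancel]

theorem stmt14_general {OK A : Type*}
    [CommRing OK] [IsDomain OK]
    [CommRing A] [Algebra OK A]
    (πK : OK) (hπK : Irreducible πK) (ϖ : A)
    [IsAdicComplete (Ideal.span {ϖ}) A] [IsAdicComplete (Ideal.span {πK}) OK]
    (qK : ℕ)
    (fK : OK⟦X⟧) (FK : MvPowerSeries (Fin 2) OK) (hFK : IsLTFGL πK qK fK FK)
    (zs : Fin qK → A)
    -- the auxiliary Coleman series `k` and `w`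
    (k w : OK⟦X⟧)
    (hwunit : IsUnit w)
    -- the Coleman identity: `𝓛_{F_K}(k·g([π_K](x))/(π_K·w([π_K](x)))) = g(x)`
    (hcol : ∀ g D : OK⟦X⟧,
      PowerSeries.C πK * pcomp w fK * D = k * pcomp g fK →
      IsTraceOf ϖ (MvPowerSeries.map (algebraMap OK A) FK) zs fK D g)
    (α : OK⟦X⟧) (hα : DvdAll (πK ^ 2) α)
    -- `MemE f` : `f ∈ 𝓔^α_K`;  `MemC h` : `h ∈ 𝓒_K = ker 𝓛_{F_K}`
    (MemE MemC : OK⟦X⟧ → Prop)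
    (hMemE : ∀ f, MemE f ↔
      IsTraceOf ϖ (MvPowerSeries.map (algebraMap OK A) FK) zs fK f (α * f))
    (hMemC : ∀ h, MemC h ↔
      IsTraceOf ϖ (MvPowerSeries.map (algebraMap OK A) FK) zs fK h 0)
    -- `Rho f D` : `D = k·α([π_K](x))·f([π_K](x))/(π_K·w([π_K](x)))`, so `ρ_α(f) = f - D`
    (Rho : OK⟦X⟧ → OK⟦X⟧ → Prop)
    (hRho : ∀ f D, Rho f D ↔
      PowerSeries.C πK * pcomp w fK * D = k * pcomp α fK * pcomp f fK) :
    -- `ρ_α` maps `𝓔^α_K` into `𝓒_K` (and is defined on all of `𝓔^α_K`)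
    (∀ f, MemE f → ∃ D, Rho f D ∧ MemC (f - D)) ∧
    -- `ρ_α` is `O_K`-linear
    (∀ f₁ D₁ f₂ D₂ (c : OK), Rho f₁ D₁ → Rho f₂ D₂ →
      Rho (f₁ + f₂) (D₁ + D₂) ∧ Rho (PowerSeries.C c * f₁) (PowerSeries.C c * D₁)) ∧
    -- `ρ_α : 𝓔^α_K → 𝓒_K` is injective
    (∀ f₁ D₁ f₂ D₂, MemE f₁ → MemE f₂ → Rho f₁ D₁ → Rho f₂ D₂ →
      f₁ - D₁ = f₂ - D₂ → f₁ = f₂) ∧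
    -- `ρ_α : 𝓔^α_K → 𝓒_K` is surjective
    (∀ h, MemC h → ∃ f D, MemE f ∧ Rho f D ∧ f - D = h) := by
  have hfK0 : constantCoeff fK = 0 := hFK.isLT.const
  have hαfK : C πK ^ 2 ∣ pcomp α fK := by
    rw [← map_pow]
    exact C_dvd_pcomp (dvdAll_iff_C_dvd.1 hα) fK
  obtain ⟨G, hG⟩ := exists_forall_C_mul_mul_eq_iff hπK.ne_zero (isUnit_pcomp hwunit fK) hαfK k
  set T := perturbation πK G fK
  have hT : IsContracting πK T := isContracting_perturbation πK G fK
  have hRhoT : ∀ f D, Rho f D ↔ D = T f := fun f D => (hRho f D).trans (hG _ D)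
  have hTraceT : ∀ f, IsTraceOf ϖ (MvPowerSeries.map (algebraMap OK A) FK) zs fK (T f) (α * f) :=
    fun f => hcol _ _ (by rw [pcomp_mul hfK0, ← mul_assoc]; exact (hG _ _).2 rfl)
  refine ⟨fun f hf => ⟨T f, (hRhoT f _).2 rfl, (hMemC _).2 ?_⟩, fun f₁ D₁ f₂ D₂ c h₁ h₂ => ?_,
    fun f₁ D₁ f₂ D₂ _ _ h₁ h₂ heq => ?_, fun h hh => ?_⟩
  · simpa using ((hMemE f).1 hf).sub (hTraceT f)
  · rw [hRhoT] at h₁ h₂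
    subst h₁ h₂
    refine ⟨(hRhoT _ _).2 (map_add T f₁ f₂).symm, (hRhoT _ _).2 ?_⟩
    simp only [T, perturbation, AddMonoidHom.mk'_apply, pcomp_C_mul]
    ring
  · rw [hRhoT] at h₁ h₂
    subst h₁ h₂
    exact sub_eq_zero.1 (hT.eq_zero_of_eq (by rw [map_sub]; linear_combination heq))
  · obtain ⟨f, hf⟩ := hT.exists_eq_add h
    refine ⟨f, T f, (hMemE f).2 ?_, (hRhoT f _).2 rfl, by linear_combination hf⟩
    simpa only [← hf, zero_add] using ((hMemC h).1 hh).add (hTraceT f)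

/-- **Theorem 3.0.1 / Theorem C.** Let `k(x) ∈ x^{q_K-1}O_K⟦x⟧` and
`w ∈ O_K⟦x⟧^×` with `𝓛_{F_K}(k) = π_K·w`, satisfying the Coleman identity
`𝓛_{F_K}(k·g([π_K](x))/(π_K·w([π_K](x)))) = g` for all `g`.  For
`α(x) ∈ π_K²·O_K⟦x⟧`, the map
`ρ_α(f) = f(x) - k(x)·α([π_K](x))·f([π_K](x))/(π_K·w([π_K](x)))` is an isomorphism of
`O_K`-modules from the eigenspace `𝓔^α_K = {f : 𝓛_{F_K}(f) = α·f}` onto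
`𝓒_K = ker 𝓛_{F_K}`. -/
theorem stmt14 {OK A : Type*}
    [CommRing OK] [IsDomain OK] [IsDiscreteValuationRing OK]
    [CommRing A] [IsDomain A] [IsDiscreteValuationRing A] [Algebra OK A]
    (hinj : Function.Injective (algebraMap OK A))
    (πK : OK) (hπK : Irreducible πK) (ϖ : A) (hϖ : Irreducible ϖ)
    [IsAdicComplete (Ideal.span {ϖ}) A] [IsAdicComplete (Ideal.span {πK}) OK]
    (qK : ℕ) (hqK : 2 ≤ qK)
    (fK : OK⟦X⟧) (FK : MvPowerSeries (Fin 2) OK) (hFK : IsLTFGL πK qK fK FK)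
    (zs : Fin qK → A) (hz0 : ∃ i, zs i = 0)
    (hzroot : ∀ i, IsEvalAt ϖ (PowerSeries.map (algebraMap OK A) fK) (zs i) 0)
    (hzinj : Function.Injective zs) (hzmax : ∀ i, ϖ ∣ zs i)
    -- the auxiliary Coleman series `k` and `w`
    (k w : OK⟦X⟧) (hk : ∀ n < qK - 1, coeff n k = 0)
    (hwunit : IsUnit w)
    (hkw : IsTraceOf ϖ (MvPowerSeries.map (algebraMap OK A) FK) zs fK k
      (PowerSeries.C πK * w))
    -- the Coleman identity: `𝓛_{F_K}(k·g([π_K](x))/(π_K·w([π_K](x)))) = g(x)`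
    (hcol : ∀ g D : OK⟦X⟧,
      PowerSeries.C πK * pcomp w fK * D = k * pcomp g fK →
      IsTraceOf ϖ (MvPowerSeries.map (algebraMap OK A) FK) zs fK D g)
    (α : OK⟦X⟧) (hα : DvdAll (πK ^ 2) α)
    -- `MemE f` : `f ∈ 𝓔^α_K`;  `MemC h` : `h ∈ 𝓒_K = ker 𝓛_{F_K}`
    (MemE MemC : OK⟦X⟧ → Prop)
    (hMemE : ∀ f, MemE f ↔
      IsTraceOf ϖ (MvPowerSeries.map (algebraMap OK A) FK) zs fK f (α * f))
    (hMemC : ∀ h, MemC h ↔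
      IsTraceOf ϖ (MvPowerSeries.map (algebraMap OK A) FK) zs fK h 0)
    -- `Rho f D` : `D = k·α([π_K](x))·f([π_K](x))/(π_K·w([π_K](x)))`, so `ρ_α(f) = f - D`
    (Rho : OK⟦X⟧ → OK⟦X⟧ → Prop)
    (hRho : ∀ f D, Rho f D ↔
      PowerSeries.C πK * pcomp w fK * D = k * pcomp α fK * pcomp f fK) :
    -- `ρ_α` maps `𝓔^α_K` into `𝓒_K` (and is defined on all of `𝓔^α_K`)
    (∀ f, MemE f → ∃ D, Rho f D ∧ MemC (f - D)) ∧
    -- `ρ_α` is `O_K`-linear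
    (∀ f₁ D₁ f₂ D₂ (c : OK), Rho f₁ D₁ → Rho f₂ D₂ →
      Rho (f₁ + f₂) (D₁ + D₂) ∧ Rho (PowerSeries.C c * f₁) (PowerSeries.C c * D₁)) ∧
    -- `ρ_α : 𝓔^α_K → 𝓒_K` is injective
    (∀ f₁ D₁ f₂ D₂, MemE f₁ → MemE f₂ → Rho f₁ D₁ → Rho f₂ D₂ →
      f₁ - D₁ = f₂ - D₂ → f₁ = f₂) ∧
    -- `ρ_α : 𝓔^α_K → 𝓒_K` is surjective
    (∀ h, MemC h → ∃ f D, MemE f ∧ Rho f D ∧ f - D = h) :=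
  stmt14_general πK hπK ϖ qK fK FK hFK zs k w hwunit hcol α hα MemE MemC hMemE hMemC Rho hRho

end Coleman
end
end
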